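/- arXiv:1701.06211 — 3 statements merged into one kernel-verified Lean document; each statement's English description precedes it below -/
import Mathlib

section
/- Let μ be a complex Radon measure on ℝ^d that is a tempered distribution, whose Fourier transform is a slowly increasing purely atomic measure μ̂=Σ_{γ∈Γ} b_γ δ_γ with Γ countable. Then for every Schwartz function ψ on ℝ^d the convolution ψ⋆μ belongs to W; more precisely, Σ_{γ∈Γ}|b_γ||ψ̂(γ)|<∞ and (ψ⋆μ)(s) = Σ_{γ∈Γ} b_γ ψ̂(γ) e^{2πi⟨s,γ⟩} for all s∈ℝ^d. -/
open MeasureTheory Metric Complex SchwartzMap Filter Topology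

noncomputable section

abbrev Ed (d : ℕ) := EuclideanSpace ℝ (Fin d)

/-- The exponential `e^{2πi⟨x,γ⟩}`. -/
def e2 {d : ℕ} (x γ : Ed d) : ℂ :=
  Complex.exp (2 * Real.pi * Complex.I * ((inner ℝ x γ : ℝ) : ℂ))

/-- A set is discrete if it meets every unit ball in finitely many points. -/
def DiscreteSet {d : ℕ} (E : Set (Ed d)) : Prop :=
  ∀ x : Ed d, (E ∩ Metric.ball x 1).Finite

/-- A set is uniformly discrete if distinct points are uniformly separated. -/
def UniformlyDiscrete {d : ℕ} (E : Set (Ed d)) : Prop :=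
  ∃ ε > (0 : ℝ), ∀ x ∈ E, ∀ y ∈ E, x ≠ y → ε ≤ dist x y

/-- A full-rank lattice in `ℝ^d` is the image of `ℤ^d` under an invertible linear map. -/
def IsFullRankLattice {d : ℕ} (L : Set (Ed d)) : Prop :=
  ∃ T : Ed d ≃ₗ[ℝ] Ed d, L = T '' {x : Ed d | ∀ i, ∃ m : ℤ, x i = (m : ℝ)}

/-- A relatively dense subset of `ℝ^d`. -/
def RelativelyDense {d : ℕ} (E : Set (Ed d)) : Prop :=
  ∃ R : ℝ, ∀ x : Ed d, ∃ y ∈ E, dist x y ≤ R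

/-- An almost periodic (uniformly) continuous function on `ℝ^d`. -/
def IsAlmostPeriodicFun {d : ℕ} (f : Ed d → ℂ) : Prop :=
  Continuous f ∧ ∀ ε > (0 : ℝ), RelativelyDense {τ : Ed d | ∀ x, ‖f (x + τ) - f x‖ < ε}

/-- A Fourier quasicrystal on `ℝ^d`: an atomic measure `μ = Σ_{λ∈Λ} a_λ δ_λ` with countable
discrete support `Λ`, whose distributional Fourier transform is the atomic measure
`Σ_{γ∈Γ} b_γ δ_γ` with countable spectrum `Γ`, both masses growing at most polynomially. -/
structure FQC (d : ℕ) where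
  Λ : Set (Ed d)
  a : Ed d → ℂ
  Γ : Set (Ed d)
  b : Ed d → ℂ
  Λ_countable : Λ.Countable
  Λ_discrete : DiscreteSet Λ
  Γ_countable : Γ.Countable
  a_ne_zero : ∀ l ∈ Λ, a l ≠ 0
  b_ne_zero : ∀ g ∈ Γ, b g ≠ 0
  growth : ∃ (C : ℝ) (k : ℕ), ∀ r : ℝ, 2 ≤ r →
      Summable (fun l : ↥(Λ ∩ Metric.ball 0 r) => ‖a l.1‖) ∧
      Summable (fun g : ↥(Γ ∩ Metric.ball 0 r) => ‖b g.1‖) ∧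
      (∑' l : ↥(Λ ∩ Metric.ball 0 r), ‖a l.1‖) +
        (∑' g : ↥(Γ ∩ Metric.ball 0 r), ‖b g.1‖) ≤ C * r ^ k
  summable_left : ∀ ψ : 𝓢(Ed d, ℂ),
      Summable (fun l : Λ => a l.1 * fourierTransformCLM ℂ ψ l.1)
  summable_right : ∀ ψ : 𝓢(Ed d, ℂ), Summable (fun g : Γ => b g.1 * ψ g.1)
  fourier_eq : ∀ ψ : 𝓢(Ed d, ℂ),
      (∑' l : Λ, a l.1 * fourierTransformCLM ℂ ψ l.1) = ∑' g : Γ, b g.1 * ψ g.1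

/-- A large Fourier quasicrystal: the masses are bounded away from zero. -/
def FQC.Large {d : ℕ} (μ : FQC d) : Prop :=
  ∃ ε > (0 : ℝ), ∀ l ∈ μ.Λ, ε ≤ ‖μ.a l‖

/-- Translation boundedness of the Fourier transform `μ̂ = Σ_{γ∈Γ} b_γ δ_γ` of a Fourier
quasicrystal: the total variation of every unit ball is uniformly bounded. -/
def FQC.HatTranslationBounded {d : ℕ} (μ : FQC d) : Prop :=
  ∃ C : ℝ, ∀ y : Ed d,
    Summable (fun g : ↥(μ.Γ ∩ Metric.ball y 1) => ‖μ.b g.1‖) ∧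
    (∑' g : ↥(μ.Γ ∩ Metric.ball y 1), ‖μ.b g.1‖) ≤ C

/-- A complex Radon measure on `ℝ^d`, given by its total variation measure `var` (locally
finite) and a density of modulus one. -/
structure CRM (d : ℕ) where
  var : Measure (Ed d)
  density : Ed d → ℂ
  locallyFinite : ∀ x : Ed d, var (Metric.ball x 1) < ⊤
  unit_density : ∀ᵐ x ∂var, ‖density x‖ = 1

/-- Integral of a function against a complex Radon measure. -/
def CRM.integral {d : ℕ} (μ : CRM d) (f : Ed d → ℂ) : ℂ :=
  ∫ x, f x * μ.density x ∂μ.var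

/-- A translation bounded complex Radon measure. -/
def CRM.TranslationBounded {d : ℕ} (μ : CRM d) : Prop :=
  ∃ C : ℝ, ∀ x : Ed d, μ.var (Metric.ball x 1) ≤ ENNReal.ofReal C

/-- A slowly increasing complex Radon measure. -/
def CRM.SlowlyIncreasing {d : ℕ} (μ : CRM d) : Prop :=
  ∃ (C : ℝ) (k : ℕ), ∀ r : ℝ, 1 ≤ r →
    μ.var (Metric.ball 0 r) ≤ ENNReal.ofReal (C * r ^ k)

/-- The measure `μ` acts on Schwartz functions (it is a tempered distribution). -/
def CRM.IsTempered {d : ℕ} (μ : CRM d) : Prop :=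
  ∀ ψ : 𝓢(Ed d, ℂ), Integrable (fun x => ψ x * μ.density x) μ.var

/-- `ν` is the distributional Fourier transform of `μ`: `ν(ψ) = μ(ψ̂)` for Schwartz `ψ`. -/
def CRM.IsFourierTransformOf {d : ℕ} (ν μ : CRM d) : Prop :=
  ∀ ψ : 𝓢(Ed d, ℂ),
    ν.integral (fun x => ψ x) = μ.integral (fun x => fourierTransformCLM ℂ ψ x)

/-- An almost periodic complex Radon measure. -/
def CRM.AlmostPeriodic {d : ℕ} (μ : CRM d) : Prop :=
  ∀ ψ : C(Ed d, ℂ), HasCompactSupport ψ →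
    IsAlmostPeriodicFun (fun x => μ.integral (fun y => ψ (x - y)))

/-- The class `W` of absolutely convergent exponential sums on `ℝ^d`. -/
def MemW {d : ℕ} (f : Ed d → ℂ) : Prop :=
  ∃ (c : ℕ → ℂ) (γ : ℕ → Ed d), Function.Injective γ ∧
    Summable (fun n => ‖c n‖) ∧ ∀ x, HasSum (fun n => c n * e2 x (γ n)) (f x)

/-- The volume of the unit ball in `ℝ^d`. -/
def omegad (d : ℕ) : ℝ := (volume (Metric.ball (0 : Ed d) 1)).toReal

/-
Split `Γ` into the dyadic shells `2ⁿ ≤ ‖γ‖ < 2ⁿ⁺¹`: the shell `n` carries `b`-mass `O(2^{nk})` by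
polynomial growth, while `ψ̂` is `O(2^{-n(k+1)})` on it, so the shells contribute a geometric
series.
For the identity, `ψ (s - ·)` is the double Fourier transform of the translate `ψ (· + s)`, whose
Fourier transform is `ψ̂` modulated by `e2 s`; testing `μ` against it gives the exponential sum.
-/

open scoped FourierTransform InnerProductSpace

def dyadicIndex (t : ℝ) : ℕ := Nat.log 2 ⌊t⌋₊

lemma two_pow_dyadicIndex_le {t : ℝ} (ht : 0 ≤ t) : (2 : ℝ) ^ dyadicIndex t ≤ 1 + t := by
  rcases Nat.eq_zero_or_pos ⌊t⌋₊ with h0 | hpos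
  · simp [dyadicIndex, h0, ht]
  · calc (2 : ℝ) ^ dyadicIndex t = ((2 ^ dyadicIndex t : ℕ) : ℝ) := by push_cast; rfl
      _ ≤ ⌊t⌋₊ := by exact_mod_cast Nat.pow_log_le_self 2 hpos.ne'
      _ ≤ t := Nat.floor_le ht
      _ ≤ 1 + t := by linarith

lemma lt_two_pow_dyadicIndex_succ (t : ℝ) : t < 2 ^ (dyadicIndex t + 1) :=
  calc t < ⌊t⌋₊ + 1 := Nat.lt_floor_add_one t
    _ ≤ ((2 ^ (dyadicIndex t + 1) : ℕ) : ℝ) := by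
        exact_mod_cast Nat.lt_pow_succ_log_self (by norm_num) _
    _ = 2 ^ (dyadicIndex t + 1) := by push_cast; rfl

lemma sum_le_tsum_of_forall_mem {α : Type*} {s t : Set α} {a : α → ℝ} (ha : ∀ x, 0 ≤ a x)
    (ht : Summable fun x : t => a x) (u : Finset s) (hu : ∀ x ∈ u, (x : α) ∈ t) :
    ∑ x ∈ u, a x ≤ ∑' x : t, a x := by
  rw [← Finset.tsum_subtype u fun x => a x]
  refine Summable.tsum_le_tsum_of_inj (fun x => ⟨x.1.1, hu x.1 x.2⟩) ?_ (fun x _ => ha x)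
    (fun _ => le_rfl) Summable.of_finite ht
  intro x y hxy
  exact Subtype.ext (Subtype.ext (congrArg (fun z : t => (z : α)) hxy))

section PolynomialGrowth

variable {E : Type*} [SeminormedAddCommGroup E] {Γ : Set E} {a : E → ℝ} {C : ℝ} {k : ℕ}

def AtomicMassLe (Γ : Set E) (a : E → ℝ) (C : ℝ) (k : ℕ) : Prop :=
  ∀ r : ℝ, 1 ≤ r → Summable (fun g : ↥(Γ ∩ ball 0 r) => a g) ∧
    (∑' g : ↥(Γ ∩ ball 0 r), a g) ≤ C * r ^ k

lemma sum_filter_dyadicIndex_eq_le (ha : ∀ x, 0 ≤ a x)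
    (hgrowth : AtomicMassLe Γ a C k) (u : Finset Γ) (n : ℕ) :
    ∑ g ∈ u with dyadicIndex ‖g.1‖ = n, a g.1 / (1 + ‖g.1‖) ^ (k + 1)
      ≤ C * 2 ^ k * (1 / 2) ^ n := by
  set r : ℝ := 2 ^ (n + 1)
  obtain ⟨hsum, hle⟩ := hgrowth r (one_le_pow₀ (by norm_num))
  have hball : ∀ g ∈ u.filter fun g => dyadicIndex ‖g.1‖ = n, g.1 ∈ Γ ∩ ball 0 r := by
    intro g hg
    refine ⟨g.2, mem_ball_zero_iff.2 ?_⟩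
    show ‖g.1‖ < 2 ^ (n + 1)
    rw [← (Finset.mem_filter.1 hg).2]
    exact lt_two_pow_dyadicIndex_succ _
  calc ∑ g ∈ u with dyadicIndex ‖g.1‖ = n, a g.1 / (1 + ‖g.1‖) ^ (k + 1)
      ≤ ∑ g ∈ u with dyadicIndex ‖g.1‖ = n, a g.1 / ((2 : ℝ) ^ n) ^ (k + 1) := by
        refine Finset.sum_le_sum fun g hg => ?_
        rw [← (Finset.mem_filter.1 hg).2]
        gcongr
        · exact ha _
        · exact two_pow_dyadicIndex_le (norm_nonneg _)
    _ = (∑ g ∈ u with dyadicIndex ‖g.1‖ = n, a g.1) / ((2 : ℝ) ^ n) ^ (k + 1) :=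
        (Finset.sum_div ..).symm
    _ ≤ C * r ^ k / ((2 : ℝ) ^ n) ^ (k + 1) := by
        gcongr
        exact (sum_le_tsum_of_forall_mem ha hsum _ hball).trans hle
    _ = C * 2 ^ k * (1 / 2) ^ n := by
        simp only [r, one_div_pow]
        field_simp
        ring

theorem summable_div_one_add_norm_pow_of_sum_ball_le (ha : ∀ x, 0 ≤ a x)
    (hgrowth : AtomicMassLe Γ a C k) :
    Summable fun g : Γ => a g.1 / (1 + ‖g.1‖) ^ (k + 1) := by
  have hC : 0 ≤ C := by
    simpa using (tsum_nonneg fun g => ha _).trans (hgrowth 1 le_rfl).2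
  have hgeom : Summable fun n : ℕ => C * 2 ^ k * (1 / 2 : ℝ) ^ n :=
    summable_geometric_two.mul_left _
  refine summable_of_sum_le (c := C * 2 ^ k * 2) (fun g => by have := ha g; positivity)
    fun u => ?_
  rw [← Finset.sum_fiberwise_of_maps_to (t := u.image fun g => dyadicIndex ‖g.1‖)
    fun g hg => Finset.mem_image_of_mem _ hg]
  calc _ ≤ ∑ n ∈ u.image fun g => dyadicIndex ‖g.1‖, C * 2 ^ k * (1 / 2 : ℝ) ^ n :=
        Finset.sum_le_sum fun n _ => sum_filter_dyadicIndex_eq_le ha hgrowth u n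
    _ ≤ ∑' n : ℕ, C * 2 ^ k * (1 / 2 : ℝ) ^ n :=
        hgeom.sum_le_tsum _ fun n _ => by positivity
    _ = C * 2 ^ k * 2 := by rw [tsum_mul_left, tsum_geometric_two]

theorem summable_mul_of_sum_ball_le {w : E → ℝ} {M : ℝ} (ha : ∀ x, 0 ≤ a x)
    (hw : ∀ x, 0 ≤ w x) (hdecay : ∀ x, (1 + ‖x‖) ^ (k + 1) * w x ≤ M)
    (hgrowth : AtomicMassLe Γ a C k) :
    Summable fun g : Γ => a g * w g := by
  refine ((summable_div_one_add_norm_pow_of_sum_ball_le ha hgrowth).mul_left M).of_nonneg_of_le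
    (fun g => mul_nonneg (ha g) (hw g)) fun g => ?_
  rw [mul_div_left_comm]
  exact mul_le_mul_of_nonneg_left ((le_div_iff₀' (by positivity)).2 (hdecay g)) (ha g)

end PolynomialGrowth

namespace SchwartzMap

lemma exists_one_add_norm_pow_mul_norm_le {E F : Type*} [NormedAddCommGroup E]
    [NormedSpace ℝ E] [NormedAddCommGroup F] [NormedSpace ℝ F] (f : 𝓢(E, F)) (k : ℕ) :
    ∃ M, ∀ x, (1 + ‖x‖) ^ k * ‖f x‖ ≤ M :=
  ⟨_, fun x => by
    simpa using one_add_le_sup_seminorm_apply (𝕜 := ℝ) (m := (k, 0)) le_rfl le_rfl f x⟩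

variable {V F : Type*} [NormedAddCommGroup V] [InnerProductSpace ℝ V] [FiniteDimensional ℝ V]
  [MeasurableSpace V] [BorelSpace V] [NormedAddCommGroup F] [NormedSpace ℂ F]

lemma fourier_fourier_apply [CompleteSpace F] (f : 𝓢(V, F)) (x : V) : 𝓕 (𝓕 f) x = f (-x) := by
  conv_rhs => rw [← FourierPair.fourierInv_fourier_eq (F := 𝓢(V, F)) f]
  rw [fourierInv_apply_eq, compCLMOfContinuousLinearEquiv_apply]
  simp

lemma fourier_compSubConstCLM_apply (f : 𝓢(V, F)) (a w : V) :
    𝓕 (f.compSubConstCLM ℂ a) w = (𝐞 (-⟪a, w⟫_ℝ) : ℂ) • 𝓕 f w := by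
  have hcomp : ⇑(f.compSubConstCLM ℂ a) = ⇑f ∘ fun v => v + -a := by
    ext v
    simp [sub_eq_add_neg]
  rw [fourier_coe, fourier_coe, hcomp]
  have hshift := VectorFourier.fourierIntegral_comp_add_right 𝐞 volume (innerₗ V) (⇑f) (-a)
  refine (congrFun hshift w).trans ?_
  simp [Circle.smul_def]
  rfl

end SchwartzMap

lemma e2_eq_fourierChar {d : ℕ} (x γ : Ed d) : e2 x γ = 𝐞 ⟪x, γ⟫_ℝ := by
  rw [e2, Real.fourierChar_apply]
  push_cast
  ring_nf

theorem convolution_in_W_general {d : ℕ} (μ : CRM d)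
    (Γ : Set (Ed d)) (b : Ed d → ℂ)
    (hSI : ∃ (C : ℝ) (k : ℕ), ∀ r : ℝ, 1 ≤ r →
      Summable (fun g : ↥(Γ ∩ Metric.ball 0 r) => ‖b g.1‖) ∧
      (∑' g : ↥(Γ ∩ Metric.ball 0 r), ‖b g.1‖) ≤ C * r ^ k)
    (hF : ∀ ψ : 𝓢(Ed d, ℂ),
      μ.integral (fun x => fourierTransformCLM ℂ ψ x) = ∑' g : Γ, b g.1 * ψ g.1) :
    ∀ ψ : 𝓢(Ed d, ℂ),
      Summable (fun g : Γ => ‖b g.1‖ * ‖fourierTransformCLM ℂ ψ g.1‖) ∧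
      ∀ s : Ed d, μ.integral (fun x => ψ (s - x)) =
        ∑' g : Γ, b g.1 * fourierTransformCLM ℂ ψ g.1 * e2 s g.1 := by
  intro ψ
  obtain ⟨C, k, hgrowth⟩ := hSI
  obtain ⟨M, hdecay⟩ := (𝓕 ψ).exists_one_add_norm_pow_mul_norm_le (k + 1)
  refine ⟨summable_mul_of_sum_ball_le (a := fun x => ‖b x‖) (w := fun x => ‖𝓕 ψ x‖)
    (fun _ => norm_nonneg _) (fun _ => norm_nonneg _) hdecay hgrowth, fun s => ?_⟩
  have h := hF (𝓕 (ψ.compSubConstCLM ℂ (-s)))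
  simp only [fourierTransformCLM_apply, fourier_fourier_apply, compSubConstCLM_apply, neg_sub_neg,
    fourier_compSubConstCLM_apply, inner_neg_left, neg_neg, smul_eq_mul] at h
  rw [h]
  refine tsum_congr fun g => ?_
  rw [e2_eq_fourierChar, fourierTransformCLM_apply]
  ring

/-- Lemma 2.5: if `μ` is tempered with slowly increasing purely atomic Fourier transform
`μ̂ = Σ_{γ∈Γ} b_γ δ_γ`, then for every Schwartz `ψ` the convolution `ψ⋆μ` is the absolutely
convergent exponential sum `Σ_γ b_γ ψ̂(γ) e^{2πi⟨s,γ⟩}`. -/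
theorem convolution_in_W {d : ℕ} (μ : CRM d) (hT : μ.IsTempered)
    (Γ : Set (Ed d)) (b : Ed d → ℂ) (hΓ : Γ.Countable)
    (hSI : ∃ (C : ℝ) (k : ℕ), ∀ r : ℝ, 1 ≤ r →
      Summable (fun g : ↥(Γ ∩ Metric.ball 0 r) => ‖b g.1‖) ∧
      (∑' g : ↥(Γ ∩ Metric.ball 0 r), ‖b g.1‖) ≤ C * r ^ k)
    (hsum : ∀ ψ : 𝓢(Ed d, ℂ), Summable (fun g : Γ => b g.1 * ψ g.1))
    (hF : ∀ ψ : 𝓢(Ed d, ℂ),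
      μ.integral (fun x => fourierTransformCLM ℂ ψ x) = ∑' g : Γ, b g.1 * ψ g.1) :
    ∀ ψ : 𝓢(Ed d, ℂ),
      Summable (fun g : Γ => ‖b g.1‖ * ‖fourierTransformCLM ℂ ψ g.1‖) ∧
      ∀ s : Ed d, μ.integral (fun x => ψ (s - x)) =
        ∑' g : Γ, b g.1 * fourierTransformCLM ℂ ψ g.1 * e2 s g.1 :=
  convolution_in_W_general μ Γ b hSI hF
end
end

section
/- Let μ=Σ_{λ∈Λ} a_λ δ_λ be an almost periodic complex Radon measure on ℝ^d with uniformly discrete support Λ and with inf_{λ∈Λ}|a_λ| ≥ ε for some ε>0. Then the set Λ is almost periodic, i.e. the measure Σ_{λ∈Λ} δ_λ is almost periodic. -/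
open MeasureTheory Metric Complex SchwartzMap Filter Topology

noncomputable section

/-
Fix a separation `η` of `Λ` and a continuous bump `φ` with `φ 0 = 1`, supported in a ball of
radius `δ ≤ η / 2`. The function `F = Σ a_λ φ(· - λ)` takes the value `a_λ` at `λ` and vanishes
off the `δ`-neighbourhood of `Λ`. Since `|a_λ| ≥ ε`, an `ε`-almost period `τ` of `F` therefore
moves every point of `Λ` to within `δ` of a point of `Λ`, and `-τ` does the same; by separation
this pairing is a bijection `σ` of `Λ` with `|λ + τ - σ λ| < δ`. Reindexing `Σ ψ(x + τ - λ)` by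
`σ` compares it termwise with `Σ ψ(x - λ)`, with an error of at most the modulus of continuity
of `ψ` at `δ` on each of a uniformly bounded number of nonzero terms.
-/

open Function

theorem RelativelyDense.mono {d : ℕ} {S T : Set (Ed d)} (hS : RelativelyDense S) (hST : S ⊆ T) :
    RelativelyDense T :=
  let ⟨R, hR⟩ := hS
  ⟨R, fun x => (hR x).imp fun _ ⟨hy, hxy⟩ => ⟨hST hy, hxy⟩⟩

theorem norm_tsum_sub_tsum_le_card_mul {ι V : Type*} [SeminormedAddCommGroup V] {f g : ι → V}
    (s : Finset ι) (hf : ∀ i ∉ s, f i = 0) (hg : ∀ i ∉ s, g i = 0) {ω : ℝ}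
    (h : ∀ i ∈ s, ‖f i - g i‖ ≤ ω) :
    ‖∑' i, f i - ∑' i, g i‖ ≤ s.card * ω := by
  rw [tsum_eq_sum hf, tsum_eq_sum hg, ← Finset.sum_sub_distrib]
  exact (norm_sum_le _ _).trans (by simpa using Finset.sum_le_card_nsmul _ _ _ h)

theorem exists_continuousMap_apply_zero_eq_one {E : Type*} [NormedAddCommGroup E]
    [NormedSpace ℝ E] [HasContDiffBump E] [FiniteDimensional ℝ E] {δ : ℝ} (hδ : 0 < δ) :
    ∃ φ : C(E, ℂ), HasCompactSupport φ ∧ φ 0 = 1 ∧ support φ ⊆ ball 0 δ := by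
  let f : ContDiffBump (0 : E) := ⟨δ / 2, δ, half_pos hδ, half_lt_self hδ⟩
  refine ⟨⟨fun u => (f u : ℂ), continuous_ofReal.comp f.continuous⟩,
    f.hasCompactSupport.comp_left ofReal_zero, ?_, fun u hu => ?_⟩
  · simp [f.one_of_mem_closedBall (mem_closedBall_self (half_pos hδ).le)]
  · rw [← f.support_eq]
    exact fun hfu => hu (by simp [hfu])

section Separated

variable {E : Type*} [SeminormedAddCommGroup E] {Λ : Set E} {η : ℝ}

theorem eq_of_dist_lt_of_separated (hsep : ∀ x ∈ Λ, ∀ y ∈ Λ, x ≠ y → η ≤ dist x y) {x y : E}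
    (hx : x ∈ Λ) (hy : y ∈ Λ) (h : dist x y < η) : x = y :=
  by_contra fun hne => (hsep x hx y hy hne).not_gt h

theorem exists_card_le_of_separated [ProperSpace E] (hη : 0 < η)
    (hsep : ∀ x ∈ Λ, ∀ y ∈ Λ, x ≠ y → η ≤ dist x y) (ρ : ℝ) :
    ∃ N : ℕ, ∀ x : E, ∃ s : Finset Λ, s.card ≤ N ∧ ∀ l : Λ, dist (l : E) x < ρ → l ∈ s := by
  obtain ⟨t, -, ht, hcover⟩ :=
    (isCompact_closedBall (0 : E) ρ).finite_cover_balls (half_pos hη)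
  refine ⟨ht.toFinset.card, fun x => ?_⟩
  set B := {l : Λ | dist (l : E) x < ρ}
  have hcenter : ∀ l ∈ B, ∃ c ∈ t, (l : E) - x ∈ ball c (η / 2) := fun l hl => by
    simpa using hcover (mem_closedBall_zero_iff.2 ((dist_eq_norm (l : E) x).symm.trans_lt hl).le)
  choose! c hct hc using hcenter
  -- two points of `Λ` sharing a ball of radius `η / 2` coincide
  have hinj : Set.InjOn c B := fun l hl l' hl' hcl => Subtype.ext <|
    eq_of_dist_lt_of_separated hsep l.2 l'.2 <| by
      have h := dist_triangle_right ((l : E) - x) (l' - x) (c l')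
      rw [dist_sub_right] at h
      linarith [mem_ball.1 (hcl ▸ hc l hl), mem_ball.1 (hc l' hl')]
  have hB := Set.Finite.of_injOn (fun l hl => hct l hl) hinj ht
  refine ⟨hB.toFinset, Finset.card_le_card_of_injOn c ?_ (by rwa [hB.coe_toFinset]),
    fun l hl => hB.mem_toFinset.2 hl⟩
  exact fun l hl => ht.mem_toFinset.2 (hct l (hB.mem_toFinset.1 hl))

theorem exists_equiv_dist_add_lt (hsep : ∀ x ∈ Λ, ∀ y ∈ Λ, x ≠ y → η ≤ dist x y) {δ : ℝ}
    (hδ : 2 * δ ≤ η) {τ : E} (hfwd : ∀ l ∈ Λ, ∃ l' ∈ Λ, dist (l + τ) l' < δ)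
    (hbwd : ∀ l' ∈ Λ, ∃ l ∈ Λ, dist (l + τ) l' < δ) :
    ∃ σ : Λ ≃ Λ, ∀ l : Λ, dist ((l : E) + τ) (σ l) < δ := by
  choose σ hσΛ hσ using fun l : Λ => hfwd l l.2
  have hbij : Bijective fun l : Λ => (⟨σ l, hσΛ l⟩ : Λ) := by
    refine ⟨fun l₁ l₂ h => Subtype.ext ?_, fun l' => ?_⟩
    · have h' : σ l₁ = σ l₂ := congrArg Subtype.val h
      refine eq_of_dist_lt_of_separated hsep l₁.2 l₂.2 ?_
      rw [← dist_add_right _ _ τ]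
      linarith [dist_triangle_right ((l₁ : E) + τ) (l₂ + τ) (σ l₂), h' ▸ hσ l₁, hσ l₂]
    · obtain ⟨l, hl, hll'⟩ := hbwd l' l'.2
      refine ⟨⟨l, hl⟩, Subtype.ext (eq_of_dist_lt_of_separated hsep (hσΛ _) l'.2 ?_)⟩
      linarith [dist_triangle_left (σ ⟨l, hl⟩) (l' : E) (l + τ), hσ ⟨l, hl⟩]
  exact ⟨Equiv.ofBijective _ hbij, hσ⟩

theorem forall_exists_dist_add_lt_of_norm_sub_lt {V : Type*} [SeminormedAddCommGroup V]
    {F : E → V} {ε δ : ℝ} (hF : ∀ l ∈ Λ, ε ≤ ‖F l‖)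
    (hsupp : ∀ v, F v ≠ 0 → ∃ l ∈ Λ, dist v l < δ) {τ : E} (hτ : ∀ x, ‖F (x + τ) - F x‖ < ε) :
    (∀ l ∈ Λ, ∃ l' ∈ Λ, dist (l + τ) l' < δ) ∧ (∀ l' ∈ Λ, ∃ l ∈ Λ, dist (l + τ) l' < δ) := by
  have hne : ∀ l ∈ Λ, ∀ v, ‖F v - F l‖ < ε → F v ≠ 0 := fun l hl v hv h0 => by
    rw [h0, zero_sub, norm_neg] at hv
    linarith [hF l hl]
  refine ⟨fun l hl => hsupp _ (hne l hl _ (hτ l)), fun l' hl' => ?_⟩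
  obtain ⟨l, hl, hd⟩ := hsupp (l' - τ) <| hne l' hl' _ <| by
    simpa [norm_sub_rev] using hτ (l' - τ)
  rw [dist_comm, dist_sub_eq_dist_add_right] at hd
  exact ⟨l, hl, hd⟩

theorem tsum_mul_sub_self_of_separated {R : Type*} [NonAssocSemiring R] [TopologicalSpace R]
    {a φ : E → R} (hsep : ∀ x ∈ Λ, ∀ y ∈ Λ, x ≠ y → η ≤ dist x y)
    (hφ0 : φ 0 = 1) (hφ : support φ ⊆ ball 0 η) (l : Λ) :
    ∑' l' : Λ, a l' * φ (l - l') = a l := by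
  rw [tsum_eq_single l, sub_self, hφ0, mul_one]
  intro l' hne
  have hφl' : φ (l - l') = 0 := notMem_support.1 fun h => hne <| Subtype.ext <|
    (eq_of_dist_lt_of_separated hsep l.2 l'.2 (by simpa [dist_eq_norm] using hφ h)).symm
  rw [hφl', mul_zero]

theorem exists_dist_lt_of_tsum_mul_sub_ne_zero {R : Type*} [NonAssocSemiring R]
    [TopologicalSpace R] {a φ : E → R} {δ : ℝ} (hφ : support φ ⊆ ball 0 δ) {v : E}
    (h : ∑' l : Λ, a l * φ (v - l) ≠ 0) : ∃ l ∈ Λ, dist v l < δ := by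
  by_contra! hfar
  have hφv : ∀ l : Λ, φ (v - l) = 0 := fun l => notMem_support.1 fun hv =>
    (hfar l l.2).not_gt (by simpa [dist_eq_norm] using hφ hv)
  exact h (by simp [hφv])

theorem exists_equiv_dist_add_lt_of_norm_tsum_sub_lt {𝕜 : Type*} [SeminormedRing 𝕜]
    {a φ : E → 𝕜} {ε δ : ℝ} (hsep : ∀ x ∈ Λ, ∀ y ∈ Λ, x ≠ y → η ≤ dist x y) (hδ : 2 * δ ≤ η)
    (ha : ∀ l ∈ Λ, ε ≤ ‖a l‖) (hφ0 : φ 0 = 1) (hφ : support φ ⊆ ball 0 δ) {τ : E}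
    (hτ : ∀ x, ‖∑' l : Λ, a l * φ (x + τ - l) - ∑' l : Λ, a l * φ (x - l)‖ < ε) :
    ∃ σ : Λ ≃ Λ, ∀ l : Λ, dist ((l : E) + τ) (σ l) < δ := by
  have hφη : support φ ⊆ ball 0 η := hφ.trans fun u hu => by
    rw [mem_ball_zero_iff] at hu ⊢
    linarith [norm_nonneg u]
  obtain ⟨hfwd, hbwd⟩ := forall_exists_dist_add_lt_of_norm_sub_lt
    (F := fun v => ∑' l : Λ, a l * φ (v - l))
    (fun l hl => (tsum_mul_sub_self_of_separated hsep hφ0 hφη ⟨l, hl⟩).symm ▸ ha l hl)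
    (fun v hv => exists_dist_lt_of_tsum_mul_sub_ne_zero hφ hv) hτ
  exact exists_equiv_dist_add_lt hsep hδ hfwd hbwd

end Separated

section Translates

variable {E V : Type*} [SeminormedAddCommGroup E] [SeminormedAddCommGroup V] {Λ : Set E}
  {ψ : E → V} {R : ℝ}

theorem dist_lt_of_apply_ne_zero (hψ : support ψ ⊆ closedBall 0 R) {u x l : E} (hu : ψ u ≠ 0)
    {r : ℝ} (h : dist u (x - l) < r) : dist l x < R + r :=
  calc dist l x = dist (x - l) 0 := by rw [dist_zero_right, dist_eq_norm']
    _ ≤ dist (x - l) u + dist u 0 := dist_triangle _ _ _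
    _ < R + r := by
      rw [dist_comm, dist_zero_right]
      linarith [mem_closedBall_zero_iff.1 (hψ hu)]

theorem continuous_tsum_comp_sub (hψc : Continuous ψ) (hψ : support ψ ⊆ closedBall 0 R)
    (hΛ : ∀ x : E, ∃ s : Finset Λ, ∀ l : Λ, dist (l : E) x < R + 1 → l ∈ s) :
    Continuous fun x => ∑' l : Λ, ψ (x - l) := by
  have hlf : LocallyFinite fun l : Λ => support fun x => ψ (x - l) := fun x => by
    obtain ⟨s, hs⟩ := hΛ x
    refine ⟨ball x 1, ball_mem_nhds x one_pos, s.finite_toSet.subset ?_⟩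
    rintro l ⟨y, hy, hyx⟩
    exact hs l (dist_lt_of_apply_ne_zero hψ hy (by rwa [dist_sub_right]))
  refine (continuous_finsum (fun l => hψc.comp (continuous_sub_right _)) hlf).congr fun x => ?_
  obtain ⟨s, hs⟩ := hΛ x
  refine (tsum_eq_finsum (s.finite_toSet.subset fun l hl => hs l ?_)).symm
  exact dist_lt_of_apply_ne_zero hψ hl (by simp)

theorem norm_tsum_comp_add_sub_sub_tsum_le {δ ω : ℝ} (hψ : support ψ ⊆ closedBall 0 R)
    (hδ : δ ≤ 1) (hψδ : ∀ u v, dist u v < δ → ‖ψ u - ψ v‖ ≤ ω) {τ : E} (σ : Λ ≃ Λ)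
    (hσ : ∀ l : Λ, dist ((l : E) + τ) (σ l) < δ) (x : E) (s : Finset Λ)
    (hs : ∀ l : Λ, dist (l : E) x < R + 1 → l ∈ s) :
    ‖∑' l : Λ, ψ (x + τ - l) - ∑' l : Λ, ψ (x - l)‖ ≤ s.card * ω := by
  have hnear : ∀ l : Λ, dist (x + τ - σ l) (x - l) < δ := fun l => by
    convert hσ l using 1
    rw [dist_eq_norm, dist_eq_norm]
    congr 1
    abel
  have hzero : ∀ u (l : Λ), dist u (x - l) < 1 → l ∉ s → ψ u = 0 := fun u l hu hl =>
    by_contra fun h => hl (hs l (dist_lt_of_apply_ne_zero hψ h hu))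
  rw [← σ.tsum_eq fun l : Λ => ψ (x + τ - l)]
  exact norm_tsum_sub_tsum_le_card_mul s (fun l => hzero _ l ((hnear l).trans_le hδ))
    (fun l => hzero _ l (by simp)) fun l _ => hψδ _ _ (hnear l)

end Translates

/-- Lemma 2.7: if `μ = Σ a_λ δ_λ` is an almost periodic measure with uniformly discrete
support and `|a_λ| ≥ ε > 0`, then the set `Λ` is almost periodic, i.e. `Σ_{λ∈Λ} δ_λ` is an
almost periodic measure. -/
theorem support_almost_periodic {d : ℕ} (Λ : Set (Ed d)) (a : Ed d → ℂ)
    (hud : UniformlyDiscrete Λ) (ε : ℝ) (hε : 0 < ε) (ha : ∀ l ∈ Λ, ε ≤ ‖a l‖)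
    (hap : ∀ ψ : C(Ed d, ℂ), HasCompactSupport ψ →
      IsAlmostPeriodicFun (fun x => ∑' l : Λ, a l.1 * ψ (x - l.1))) :
    ∀ ψ : C(Ed d, ℂ), HasCompactSupport ψ →
      IsAlmostPeriodicFun (fun x => ∑' l : Λ, ψ (x - l.1)) := by
  obtain ⟨η, hη, hsep⟩ := hud
  intro ψ hψ
  obtain ⟨R, hR⟩ := hψ.isBounded.subset_closedBall 0
  have hψR : support ψ ⊆ closedBall 0 R := (subset_tsupport ψ).trans hR
  obtain ⟨N, hN⟩ := exists_card_le_of_separated hη hsep (R + 1)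
  refine ⟨continuous_tsum_comp_sub ψ.continuous hψR fun x => (hN x).imp fun _ => And.right,
    fun ε' hε' => ?_⟩
  obtain ⟨δ₀, hδ₀, hψδ₀⟩ := Metric.uniformContinuous_iff.1
    (hψ.uniformContinuous_of_continuous ψ.continuous) (ε' / (N + 1)) (by positivity)
  obtain ⟨δ, hδ, hδδ₀, hδη, hδ1⟩ : ∃ δ > 0, δ ≤ δ₀ ∧ 2 * δ ≤ η ∧ δ ≤ 1 :=
    ⟨min δ₀ (min (η / 2) 1), by positivity, min_le_left _ _, by
      linarith [(min_le_right δ₀ _).trans (min_le_left (η / 2) 1)],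
      (min_le_right _ _).trans (min_le_right _ _)⟩
  obtain ⟨φ, hφc, hφ0, hφ⟩ := exists_continuousMap_apply_zero_eq_one (E := Ed d) hδ
  refine ((hap φ hφc).2 ε hε).mono fun τ hτ x => ?_
  obtain ⟨σ, hσ⟩ := exists_equiv_dist_add_lt_of_norm_tsum_sub_lt hsep hδη ha hφ0 hφ hτ
  obtain ⟨s, hsN, hs⟩ := hN x
  calc _ ≤ s.card * (ε' / (N + 1)) :=
        norm_tsum_comp_add_sub_sub_tsum_le hψR hδ1
          (fun u v huv => (dist_eq_norm (ψ u) (ψ v) ▸ hψδ₀ (huv.trans_le hδδ₀)).le) σ hσ x s hs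
    _ ≤ N * (ε' / (N + 1)) := by gcongr
    _ < ε' := by
      rw [← mul_div_assoc, div_lt_iff₀ (by positivity)]
      linarith

end
end

section
/- Let μ=Σ_{λ∈Λ} a_λ δ_λ be a complex atomic measure on ℝ^d with uniformly discrete support Λ which is a tempered distribution, and suppose its Fourier transform μ̂ is a slowly increasing measure. Then sup_{λ∈Λ}|a_λ|<∞, and consequently the measure μ is translation bounded. -/
open MeasureTheory Metric Complex SchwartzMap Filter Topology

noncomputable section

/-!
Test the Fourier relation against `ψ = 𝓕⁻ (φ (· - λ))`, where `φ` is a bump equal to `1` at the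
origin and vanishing beyond the separation radius of `Λ`: the sum collapses to the single mass
`a λ = ν(ψ)`. Translation only multiplies `𝓕⁻ φ` by a unimodular phase, so every mass is bounded by
`∫ |𝓕⁻ φ| d|ν|`. A volume-packing argument bounds the number of points of `Λ` in a unit ball
uniformly in its centre, which turns bounded masses into translation boundedness.
-/

open scoped FourierTransform ENNReal

theorem Finset.card_mul_addHaar_ball_le {E : Type*} [NormedAddCommGroup E] [MeasurableSpace E]
    [BorelSpace E] (μ : Measure E) [μ.IsAddHaarMeasure] {F : Finset E} {x : E} {r ε : ℝ}
    (hF : ∀ p ∈ F, p ∈ ball x r)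
    (hsep : (F : Set E).Pairwise fun p q => ε ≤ dist p q) :
    F.card * μ (ball 0 (ε / 2)) ≤ μ (ball 0 (r + ε / 2)) := by
  have hdisj : (F : Set E).PairwiseDisjoint fun p => ball p (ε / 2) := fun p hp q hq hpq =>
    ball_disjoint_ball (by linarith [hsep hp hq hpq])
  have hunion : (⋃ p ∈ F, ball p (ε / 2)) ⊆ ball x (r + ε / 2) := by
    refine Set.iUnion₂_subset fun p hp y hy => mem_ball.2 ((dist_triangle y p x).trans_lt ?_)
    linarith [mem_ball.1 hy, mem_ball.1 (hF p hp)]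
  calc (F.card : ℝ≥0∞) * μ (ball 0 (ε / 2)) = ∑ p ∈ F, μ (ball p (ε / 2)) := by
        simp [Measure.addHaar_ball_center μ]
    _ = μ (⋃ p ∈ F, ball p (ε / 2)) :=
        (measure_biUnion_finset hdisj fun _ _ => measurableSet_ball).symm
    _ ≤ μ (ball x (r + ε / 2)) := measure_mono hunion
    _ = μ (ball 0 (r + ε / 2)) := Measure.addHaar_ball_center μ x _

theorem exists_finite_ncard_le_of_pairwise_le_dist {E : Type*} [NormedAddCommGroup E]
    [NormedSpace ℝ E] [FiniteDimensional ℝ E] {ε : ℝ} (hε : 0 < ε) (r : ℝ) :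
    ∃ N : ℝ, ∀ (x : E) (S : Set E), S ⊆ ball x r → S.Pairwise (fun p q => ε ≤ dist p q) →
      S.Finite ∧ (S.ncard : ℝ) ≤ N := by
  borelize E
  let μ : Measure E := Measure.addHaar
  have hsmall : μ (ball 0 (ε / 2)) ≠ 0 := (measure_ball_pos μ 0 (by positivity)).ne'
  set N := (μ (ball 0 (r + ε / 2)) / μ (ball 0 (ε / 2))).toReal
  have hcard : ∀ (x : E) (F : Finset E), (∀ p ∈ F, p ∈ ball x r) →
      (F : Set E).Pairwise (fun p q => ε ≤ dist p q) → (F.card : ℝ) ≤ N := fun x F hF hsep => by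
    have := (ENNReal.le_div_iff_mul_le (Or.inl hsmall) (Or.inl measure_ball_lt_top.ne)).2
      (F.card_mul_addHaar_ball_le μ hF hsep)
    calc (F.card : ℝ) = (F.card : ℝ≥0∞).toReal := by simp
      _ ≤ N := ENNReal.toReal_mono (ENNReal.div_lt_top measure_ball_lt_top.ne hsmall).ne this
  refine ⟨N, fun x S hS hsep => ?_⟩
  have hfin : S.Finite := by
    by_contra hinf
    obtain ⟨F, hFS, hFc⟩ := Set.Infinite.exists_subset_card_eq hinf (⌈N⌉₊ + 1)
    have hle := hcard x F (fun p hp => hS (hFS hp)) (hsep.mono hFS)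
    rw [hFc] at hle
    push_cast at hle
    linarith [Nat.le_ceil N]
  refine ⟨hfin, ?_⟩
  rw [Set.ncard_eq_toFinset_card S hfin]
  exact hcard x _ (fun p hp => hS (hfin.mem_toFinset.1 hp)) (by rwa [hfin.coe_toFinset])

theorem Set.Finite.tsum_le_ncard_mul {α : Type*} {S : Set α} (hS : S.Finite) {f : α → ℝ} {M : ℝ}
    (hf : ∀ x ∈ S, f x ≤ M) : ∑' x : S, f x ≤ S.ncard * M := by
  have := hS.fintype
  rw [tsum_fintype, ← Nat.card_coe_set_eq, Nat.card_eq_fintype_card, ← Finset.card_univ,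
    ← nsmul_eq_mul]
  exact Finset.sum_le_card_nsmul _ _ _ fun x _ => hf x x.2

theorem Real.norm_fourierInv_comp_sub {V F : Type*} [NormedAddCommGroup V] [InnerProductSpace ℝ V]
    [FiniteDimensional ℝ V] [MeasurableSpace V] [BorelSpace V] [NormedAddCommGroup F]
    [NormedSpace ℂ F] (f : V → F) (c w : V) : ‖𝓕⁻ (fun x => f (x - c)) w‖ = ‖𝓕⁻ f w‖ := by
  simp_rw [sub_eq_add_neg]
  change ‖VectorFourier.fourierIntegral 𝐞 volume (-innerₗ V) (f ∘ fun x => x + -c) w‖ =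
    ‖VectorFourier.fourierIntegral 𝐞 volume (-innerₗ V) f w‖
  rw [VectorFourier.fourierIntegral_comp_add_right, Circle.norm_smul]

theorem SchwartzMap.norm_fourierInv_compSubConstCLM {V F : Type*} [NormedAddCommGroup V]
    [InnerProductSpace ℝ V] [FiniteDimensional ℝ V] [MeasurableSpace V] [BorelSpace V]
    [NormedAddCommGroup F] [NormedSpace ℂ F] [CompleteSpace F] (f : 𝓢(V, F)) (c w : V) :
    ‖𝓕⁻ (f.compSubConstCLM ℂ c) w‖ = ‖𝓕⁻ f w‖ := by
  rw [fourierInv_coe, fourierInv_coe]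
  exact Real.norm_fourierInv_comp_sub f c w

theorem CRM.norm_integral_le {d : ℕ} (ν : CRM d) (f : Ed d → ℂ) :
    ‖ν.integral f‖ ≤ ∫ x, ‖f x‖ ∂ν.var := by
  refine (norm_integral_le_integral_norm _).trans_eq (integral_congr_ae ?_)
  filter_upwards [ν.unit_density] with x hx
  simp [hx]

theorem norm_le_integral_norm_fourierInv {d : ℕ} {Λ : Set (Ed d)} {a : Ed d → ℂ} {ν : CRM d}
    (hF : ∀ ψ : 𝓢(Ed d, ℂ),
      ν.integral (fun x => ψ x) = ∑' l : Λ, a l.1 * fourierTransformCLM ℂ ψ l.1)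
    (φ : 𝓢(Ed d, ℂ)) (hφ₀ : φ 0 = 1) {l₀ : Ed d} (hl₀ : l₀ ∈ Λ)
    (hφΛ : ∀ l ∈ Λ, l ≠ l₀ → φ (l - l₀) = 0) :
    ‖a l₀‖ ≤ ∫ x, ‖𝓕⁻ φ x‖ ∂ν.var := by
  set φ₀ := φ.compSubConstCLM ℂ l₀
  have hψ : fourierTransformCLM ℂ (𝓕⁻ φ₀) = φ₀ := by
    rw [fourierTransformCLM_apply, FourierTransform.fourier_fourierInv_eq]
  have hsum : ∑' l : Λ, a l.1 * fourierTransformCLM ℂ (𝓕⁻ φ₀) l.1 = a l₀ := by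
    rw [hψ, tsum_eq_single ⟨l₀, hl₀⟩ fun l hl => ?_]
    · simp [φ₀, hφ₀]
    · simp [φ₀, hφΛ l l.2 (Subtype.coe_ne_coe.2 hl)]
  calc ‖a l₀‖ = ‖ν.integral fun x => 𝓕⁻ φ₀ x‖ := by rw [hF, hsum]
    _ ≤ ∫ x, ‖𝓕⁻ φ₀ x‖ ∂ν.var := ν.norm_integral_le _
    _ = ∫ x, ‖𝓕⁻ φ x‖ ∂ν.var := by simp_rw [φ₀, norm_fourierInv_compSubConstCLM]

theorem UniformlyDiscrete.exists_norm_le_of_fourier {d : ℕ} {Λ : Set (Ed d)} {a : Ed d → ℂ}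
    (hud : UniformlyDiscrete Λ) (ν : CRM d)
    (hF : ∀ ψ : 𝓢(Ed d, ℂ),
      ν.integral (fun x => ψ x) = ∑' l : Λ, a l.1 * fourierTransformCLM ℂ ψ l.1) :
    ∃ M, 0 ≤ M ∧ ∀ l ∈ Λ, ‖a l‖ ≤ M := by
  obtain ⟨ε, hε, hsep⟩ := hud
  let b : ContDiffBump (0 : Ed d) := ⟨ε / 2, ε, by positivity, by linarith⟩
  let φ : 𝓢(Ed d, ℂ) := HasCompactSupport.toSchwartzMap (f := fun x => (b x : ℂ))
    (b.hasCompactSupport.comp_left Complex.ofReal_zero) (ofRealCLM.contDiff.comp b.contDiff)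
  refine ⟨∫ x, ‖𝓕⁻ φ x‖ ∂ν.var, integral_nonneg fun _ => norm_nonneg _, fun l₀ hl₀ => ?_⟩
  refine norm_le_integral_norm_fourierInv hF φ ?_ hl₀ fun l hl hne => ?_
  · change ((b 0 : ℝ) : ℂ) = 1
    rw [b.one_of_mem_closedBall (mem_closedBall_self (by positivity)), ofReal_one]
  · change ((b (l - l₀) : ℝ) : ℂ) = 0
    rw [b.zero_of_le_dist (by simpa [dist_eq_norm] using hsep l hl l₀ hl₀ hne), ofReal_zero]

theorem masses_bounded_general {d : ℕ} (Λ : Set (Ed d)) (a : Ed d → ℂ)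
    (hud : UniformlyDiscrete Λ)
    (ν : CRM d)
    (hF : ∀ ψ : 𝓢(Ed d, ℂ),
      ν.integral (fun x => ψ x) = ∑' l : Λ, a l.1 * fourierTransformCLM ℂ ψ l.1) :
    (∃ M : ℝ, ∀ l ∈ Λ, ‖a l‖ ≤ M) ∧
    ∃ C : ℝ, ∀ x : Ed d,
      Summable (fun l : ↥(Λ ∩ Metric.ball x 1) => ‖a l.1‖) ∧
      (∑' l : ↥(Λ ∩ Metric.ball x 1), ‖a l.1‖) ≤ C := by
  obtain ⟨M, hM₀, hM⟩ := hud.exists_norm_le_of_fourier ν hF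
  obtain ⟨ε, hε, hsep⟩ := hud
  obtain ⟨N, hN⟩ := exists_finite_ncard_le_of_pairwise_le_dist (E := Ed d) hε 1
  refine ⟨⟨M, hM⟩, N * M, fun x => ?_⟩
  obtain ⟨hfin, hcard⟩ := hN x (Λ ∩ ball x 1) Set.inter_subset_right
    fun p hp q hq hpq => hsep p hp.1 q hq.1 hpq
  have := hfin.to_subtype
  refine ⟨Summable.of_finite, ?_⟩
  calc ∑' l : ↥(Λ ∩ ball x 1), ‖a l.1‖ ≤ (Λ ∩ ball x 1).ncard * M :=
        hfin.tsum_le_ncard_mul fun l hl => hM l hl.1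
    _ ≤ N * M := mul_le_mul_of_nonneg_right hcard hM₀

/-- Lemma 2.8: a uniformly discrete atomic measure `μ = Σ a_λ δ_λ` which is a tempered
distribution with slowly increasing Fourier transform has bounded masses, and consequently
is translation bounded. -/
theorem masses_bounded {d : ℕ} (Λ : Set (Ed d)) (a : Ed d → ℂ) (hΛ : Λ.Countable)
    (hud : UniformlyDiscrete Λ)
    (hT : ∀ ψ : 𝓢(Ed d, ℂ), Summable (fun l : Λ => ‖a l.1‖ * ‖ψ l.1‖))
    (ν : CRM d) (hSI : ν.SlowlyIncreasing)
    (hF : ∀ ψ : 𝓢(Ed d, ℂ),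
      ν.integral (fun x => ψ x) = ∑' l : Λ, a l.1 * fourierTransformCLM ℂ ψ l.1) :
    (∃ M : ℝ, ∀ l ∈ Λ, ‖a l‖ ≤ M) ∧
    ∃ C : ℝ, ∀ x : Ed d,
      Summable (fun l : ↥(Λ ∩ Metric.ball x 1) => ‖a l.1‖) ∧
      (∑' l : ↥(Λ ∩ Metric.ball x 1), ‖a l.1‖) ≤ C :=
  masses_bounded_general Λ a hud ν hF
end
end
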